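/- arXiv:1109.4731 — 7 statements merged into one kernel-verified Lean document; each statement's English description precedes it below -/
import Mathlib

section
/- In a finite simple graph G on vertex set V, a set B ⊆ V is NOT c-accessing if and only if there exists C ⊆ V \ B with B ⊆ Odd(C). -/
variable {V : Type*} [Fintype V] [DecidableEq V]

def oddNbhd (G : SimpleGraph V) [DecidableRel G.Adj] (D : Finset V) : Finset V :=
  Finset.univ.filter fun v => Odd (G.neighborFinset v ∩ D).card

def cAccessing (G : SimpleGraph V) [DecidableRel G.Adj] (B : Finset V) : Prop :=
  ∃ D ⊆ B, Odd D.card ∧ oddNbhd G D ⊆ B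

/-!
Identify a vertex set with its indicator vector over `ZMod 2` and let `A` be the adjacency matrix.
Then `B` is c-accessing iff some `x` with `x` and `A x` both vanishing off `B` has odd weight
`1 ⬝ᵥ x`. By linear duality, all such `x` have even weight iff `1 = p + A c` for vectors `p`, `c`
vanishing on `B`; restricted to `B` this says `A c = 1`, i.e. `B ⊆ Odd(C)` for the support `C ⊆ Bᶜ`
of `c`.
-/

namespace Matrix

variable {K m n : Type*} [Field K] [Fintype m] [Fintype n]

theorem exists_vecMul_eq_iff (M : Matrix m n K) (b : n → K) :
    (∃ y, y ᵥ* M = b) ↔ ∀ x, M *ᵥ x = 0 → b ⬝ᵥ x = 0 := by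
  classical
  constructor
  · rintro ⟨y, rfl⟩ x hx
    rw [← dotProduct_mulVec, hx, dotProduct_zero]
  · intro h
    have hb : dotProductBilin K K b ∈ (LinearMap.ker M.mulVecLin).dualAnnihilator :=
      (Submodule.mem_dualAnnihilator _).2 h
    rw [← LinearMap.range_dualMap_eq_dualAnnihilator_ker] at hb
    obtain ⟨g, hg⟩ := hb
    refine ⟨fun i => g (Pi.single i 1), dotProduct_eq_iff.1 fun x => ?_⟩
    calc (fun i => g (Pi.single i 1)) ᵥ* M ⬝ᵥ x
        = g (M *ᵥ x) := by
          rw [← dotProduct_mulVec, LinearMap.pi_apply_eq_sum_univ g (M *ᵥ x)]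
          simp only [dotProduct, smul_eq_mul, mul_comm, ← Pi.single_apply, Pi.single_comm]
      _ = b ⬝ᵥ x := LinearMap.congr_fun hg x

theorem exists_vecMul_eq_on_iff (A : Matrix n n K) (s : Finset n) (b : n → K) :
    (∃ c, (∀ i ∈ s, c i = 0) ∧ ∀ i ∈ s, (c ᵥ* A) i = b i) ↔
      ∀ x, (∀ i ∉ s, x i = 0 ∧ (A *ᵥ x) i = 0) → b ⬝ᵥ x = 0 := by
  classical
  -- the rows of `diagonal r` and of `diagonal r * A` are those of `1` and of `A` outside `s`
  set r : n → K := fun i => if i ∈ s then 0 else 1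
  have hr : ∀ v i, (v ᵥ* diagonal r) i = if i ∈ s then 0 else v i := by
    intro v i; simp [vecMul_diagonal, r]
  have hker : ∀ x, fromRows (diagonal r) (diagonal r * A) *ᵥ x = 0 ↔
      ∀ i ∉ s, x i = 0 ∧ (A *ᵥ x) i = 0 := by
    intro x
    simp [fromRows_mulVec, ← mulVec_mulVec, mulVec_diagonal, funext_iff, r, imp_and, forall_and]
  have hrange : (∃ y, y ᵥ* fromRows (diagonal r) (diagonal r * A) = b) ↔
      ∃ c, (∀ i ∈ s, c i = 0) ∧ ∀ i ∈ s, (c ᵥ* A) i = b i := by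
    simp only [vecMul_fromRows, ← vecMul_vecMul]
    constructor
    · rintro ⟨y, hy⟩
      refine ⟨y ∘ Sum.inr ᵥ* diagonal r, fun i hi => by simp [hr, hi], fun i hi => ?_⟩
      simpa [hr, hi] using congr_fun hy i
    · rintro ⟨c, hc, hcA⟩
      have hcr : c ᵥ* diagonal r = c := funext fun i => by
        by_cases hi : i ∈ s <;> simp [hr, hi, hc]
      refine ⟨Sum.elim (b - c ᵥ* A) c, funext fun i => ?_⟩
      by_cases hi : i ∈ s <;> simp [hr, hcr, hi, hcA]
  simp only [← hrange, exists_vecMul_eq_iff, hker]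

end Matrix

open Matrix Finset SimpleGraph

section

variable {α : Type*} [DecidableEq α]

def charVec (D : Finset α) : α → ZMod 2 := fun a => if a ∈ D then 1 else 0

theorem charVec_eq_zero_iff {D : Finset α} {a : α} : charVec D a = 0 ↔ a ∉ D := by
  by_cases ha : a ∈ D <;> simp [charVec, ha]

theorem sum_charVec (s D : Finset α) : ∑ a ∈ s, charVec D a = ((s ∩ D).card : ZMod 2) := by
  simp [charVec]

variable [Fintype α]

theorem exists_charVec_eq (x : α → ZMod 2) : ∃ D, charVec D = x := by
  have two_values : ∀ a : ZMod 2, a ≠ 0 → a = 1 := by decide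
  refine ⟨univ.filter (x · ≠ 0), funext fun a => ?_⟩
  by_cases ha : x a = 0 <;> simp [charVec, ha, two_values]

theorem odd_card_iff_one_dotProduct_charVec {D : Finset α} :
    Odd D.card ↔ 1 ⬝ᵥ charVec D ≠ 0 := by
  simp [charVec, one_dotProduct, ZMod.natCast_ne_zero_iff_odd]

end

section

variable (G : SimpleGraph V) [DecidableRel G.Adj]

theorem mem_oddNbhd_iff {D : Finset V} {v : V} :
    v ∈ oddNbhd G D ↔ (charVec D ᵥ* G.adjMatrix (ZMod 2)) v = 1 := by
  simp [oddNbhd, adjMatrix_vecMul_apply, sum_charVec, ZMod.natCast_eq_one_iff_odd]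

theorem notMem_oddNbhd_iff {D : Finset V} {v : V} :
    v ∉ oddNbhd G D ↔ (G.adjMatrix (ZMod 2) *ᵥ charVec D) v = 0 := by
  simp [oddNbhd, adjMatrix_mulVec_apply, sum_charVec,
    ZMod.natCast_eq_zero_iff_even]

theorem cAccessing_iff_exists_vec (B : Finset V) :
    cAccessing G B ↔ ∃ x : V → ZMod 2,
      (∀ v ∉ B, x v = 0 ∧ (G.adjMatrix (ZMod 2) *ᵥ x) v = 0) ∧ 1 ⬝ᵥ x ≠ 0 := by
  constructor
  · rintro ⟨D, hDB, hodd, hOddB⟩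
    exact ⟨charVec D, fun v hv => ⟨charVec_eq_zero_iff.2 fun h => hv (hDB h),
      (notMem_oddNbhd_iff G).1 fun h => hv (hOddB h)⟩, odd_card_iff_one_dotProduct_charVec.1 hodd⟩
  · rintro ⟨x, hx, hsum⟩
    obtain ⟨D, rfl⟩ := exists_charVec_eq x
    refine ⟨D, fun v hvD => ?_, odd_card_iff_one_dotProduct_charVec.2 hsum, fun v hv => ?_⟩
    · by_contra hvB
      exact charVec_eq_zero_iff.1 (hx v hvB).1 hvD
    · by_contra hvB
      exact (notMem_oddNbhd_iff G).2 (hx v hvB).2 hv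

theorem exists_subset_compl_oddNbhd_iff_exists_vec (B : Finset V) :
    (∃ C ⊆ Bᶜ, B ⊆ oddNbhd G C) ↔ ∃ c : V → ZMod 2,
      (∀ v ∈ B, c v = 0) ∧ ∀ v ∈ B, (c ᵥ* G.adjMatrix (ZMod 2)) v = 1 := by
  constructor
  · rintro ⟨C, hCB, hBOdd⟩
    exact ⟨charVec C, fun v hv => charVec_eq_zero_iff.2 fun h => mem_compl.1 (hCB h) hv,
      fun v hv => (mem_oddNbhd_iff G).1 (hBOdd hv)⟩
  · rintro ⟨c, hc, hcA⟩
    obtain ⟨C, rfl⟩ := exists_charVec_eq c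
    exact ⟨C, fun v hvC => mem_compl.2 fun hv => charVec_eq_zero_iff.1 (hc v hv) hvC,
      fun v hv => (mem_oddNbhd_iff G).2 (hcA v hv)⟩

end

theorem not_cAccessing_iff (G : SimpleGraph V) [DecidableRel G.Adj] (B : Finset V) :
    ¬ cAccessing G B ↔ ∃ C ⊆ Bᶜ, B ⊆ oddNbhd G C := by
  rw [cAccessing_iff_exists_vec, exists_subset_compl_oddNbhd_iff_exists_vec]
  simpa using (exists_vecMul_eq_on_iff (G.adjMatrix (ZMod 2)) B 1).symm
end

section
/- In the GSS scheme on a graph G, every c-accessing set B is authorised: there is a function of the shares {(k(i), c(i)) : i ∈ B} that equals the secret s for all keys k, namely B ↦ Σ_{i∈D} c(i) + Σ_{j∈Odd(D)} k(j) for any odd D ⊆ B with Odd(D) ⊆ B. -/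
variable {V : Type*} [Fintype V] [DecidableEq V]

def authorised (G : SimpleGraph V) [DecidableRel G.Adj] (B : Finset V) : Prop :=
  ∃ f : (B → ZMod 2 × ZMod 2) → ZMod 2,
    ∀ (s : ZMod 2) (k : V → ZMod 2),
      f (fun i => (k i.1, s + ∑ j ∈ G.neighborFinset i.1, k j)) = s

/-!
Summing the shares of an odd set `D` gives
`|D| s + Σ_{i ∈ D} Σ_{j ∼ i} k(j) = s + Σ_j |N(j) ∩ D| k(j)` over `ZMod 2`; the key `k(j)`
survives exactly when `j ∈ Odd(D)`, so adding the keys of `Odd(D)` cancels every key and leaves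
the secret. When `D` and `Odd(D)` lie in `B`, this is a function of the shares held by `B`.
-/

section CharTwo

variable {M : Type*} [AddCommGroup M] [Module (ZMod 2) M]

theorem ZModModule.nsmul_eq_ite_odd (n : ℕ) (x : M) : n • x = if Odd n then x else 0 := by
  rw [← Nat.cast_smul_eq_nsmul (ZMod 2)]
  split_ifs with hn
  · rw [(ZMod.natCast_eq_one_iff_odd).2 hn, one_smul]
  · rw [(ZMod.natCast_eq_zero_iff_even).2 (Nat.not_odd_iff_even.1 hn), zero_smul]

theorem ZModModule.sum_const_of_odd_card {ι : Type*} {D : Finset ι} (hD : Odd D.card) (x : M) :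
    ∑ _i ∈ D, x = x := by
  rw [Finset.sum_const, ZModModule.nsmul_eq_ite_odd, if_pos hD]

end CharTwo

namespace SimpleGraph

variable (G : SimpleGraph V) [DecidableRel G.Adj]

theorem sum_sum_neighborFinset_eq_sum_card_nsmul {M : Type*} [AddCommMonoid M] (D : Finset V)
    (k : V → M) :
    ∑ i ∈ D, ∑ j ∈ G.neighborFinset i, k j = ∑ j, (G.neighborFinset j ∩ D).card • k j := by
  rw [Finset.sum_comm' (t' := Finset.univ) (s' := fun j => G.neighborFinset j ∩ D)]
  · simp only [Finset.sum_const]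
  · intro i j
    simp [G.adj_comm, and_comm]

variable {M : Type*} [AddCommGroup M] [Module (ZMod 2) M]

theorem sum_oddNbhd_eq_sum_sum_neighborFinset (D : Finset V) (k : V → M) :
    ∑ j ∈ oddNbhd G D, k j = ∑ i ∈ D, ∑ j ∈ G.neighborFinset i, k j := by
  simp only [sum_sum_neighborFinset_eq_sum_card_nsmul, ZModModule.nsmul_eq_ite_odd, oddNbhd,
    Finset.sum_filter]

theorem sum_shares_add_sum_oddNbhd_keys {D : Finset V} (hD : Odd D.card) (s : M) (k : V → M) :
    ∑ i ∈ D, (s + ∑ j ∈ G.neighborFinset i, k j) + ∑ j ∈ oddNbhd G D, k j = s := by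
  rw [Finset.sum_add_distrib, ZModModule.sum_const_of_odd_card hD,
    sum_oddNbhd_eq_sum_sum_neighborFinset, add_assoc, ZModModule.add_self, add_zero]

end SimpleGraph

theorem cAccessing_authorised (G : SimpleGraph V) [DecidableRel G.Adj] (B : Finset V)
    (hB : cAccessing G B) : authorised G B := by
  obtain ⟨D, hDB, hD, hOddB⟩ := hB
  refine ⟨fun g => ∑ i ∈ D.subtype (· ∈ B), (g i).2
    + ∑ j ∈ (oddNbhd G D).subtype (· ∈ B), (g j).1, fun s k => ?_⟩
  dsimp only
  rw [Finset.sum_subtype_of_mem (fun i => s + ∑ j ∈ G.neighborFinset i, k j) hDB,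
    Finset.sum_subtype_of_mem k hOddB]
  exact G.sum_shares_add_sum_oddNbhd_keys hD s k
end

section
/- Privacy of GSS via a bijection on keys: let G be a finite simple graph, B ⊆ V not c-accessing, and let C ⊆ V \ B satisfy B ⊆ Odd(C). Then for every key assignment k : V → ZMod 2, the modified keys k' defined by k'(j) = k(j) + 1 for j ∈ C and k'(j) = k(j) otherwise, satisfy: k'(i) = k(i) for all i ∈ B, and the shares computed with secret s and keys k' restricted to B equal the shares computed with secret s+1 and keys k restricted to B. -/
/-!
Flipping the keys on `C` shifts the key sum over `N(i)` by `|N(i) ∩ C|`, which is odd for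
`i ∈ B`; in `ZMod 2` this is the same as flipping the secret. Since `C` misses `B`, the keys
held by `B` do not change.
-/

variable {V : Type*} [Fintype V] [DecidableEq V]

theorem mem_oddNbhd {G : SimpleGraph V} [DecidableRel G.Adj] {D : Finset V} {v : V} :
    v ∈ oddNbhd G D ↔ Odd (G.neighborFinset v ∩ D).card := by
  simp [oddNbhd]

theorem Finset.sum_ite_mem_add_one {α R : Type*} [DecidableEq α] [AddCommMonoidWithOne R]
    (s t : Finset α) (f : α → R) :
    ∑ j ∈ s, (if j ∈ t then f j + 1 else f j) = ∑ j ∈ s, f j + (s ∩ t).card := by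
  have hsplit : ∀ j, (if j ∈ t then f j + 1 else f j) = f j + if j ∈ t then 1 else 0 := by
    intro j; split_ifs <;> simp
  simp only [hsplit, Finset.sum_add_distrib, Finset.sum_boole, Finset.filter_mem_eq_inter]

theorem gss_privacy_bijection_general (G : SimpleGraph V) [DecidableRel G.Adj] (B : Finset V)
    (C : Finset V) (hC : C ⊆ Bᶜ) (hOdd : B ⊆ oddNbhd G C)
    (s : ZMod 2) (k : V → ZMod 2) :
    let k' : V → ZMod 2 := fun j => if j ∈ C then k j + 1 else k j
    ∀ i ∈ B, k' i = k i ∧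
      s + ∑ j ∈ G.neighborFinset i, k' j = (s + 1) + ∑ j ∈ G.neighborFinset i, k j := by
  intro k' i hi
  have hiC : i ∉ C := fun h => Finset.mem_compl.mp (hC h) hi
  have hflips : ((G.neighborFinset i ∩ C).card : ZMod 2) = 1 :=
    ZMod.natCast_eq_one_iff_odd.mpr (mem_oddNbhd.mp (hOdd hi))
  refine ⟨if_neg hiC, ?_⟩
  rw [Finset.sum_ite_mem_add_one, hflips]
  ring

theorem gss_privacy_bijection (G : SimpleGraph V) [DecidableRel G.Adj] (B : Finset V)
    (hB : ¬ cAccessing G B) (C : Finset V) (hC : C ⊆ Bᶜ) (hOdd : B ⊆ oddNbhd G C)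
    (s : ZMod 2) (k : V → ZMod 2) :
    let k' : V → ZMod 2 := fun j => if j ∈ C then k j + 1 else k j
    ∀ i ∈ B, k' i = k i ∧
      s + ∑ j ∈ G.neighborFinset i, k' j = (s + 1) + ∑ j ∈ G.neighborFinset i, k j :=
  gss_privacy_bijection_general G B C hC hOdd s k
end

section
/- If B is not c-accessing in a finite simple graph G, then for each secret s ∈ ZMod 2 the map k ↦ (restriction to B of the shares (k(i), s + Σ_{j∈N(i)} k(j))) has the property that the distribution of B's shares under uniform random keys is identical for s = 0 and s = 1; concretely, there is a bijection φ on key assignments V → ZMod 2 such that shares_B(s, k) = shares_B(s+1, φ(k)) for all k. -/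
variable {V : Type*} [Fintype V] [DecidableEq V]

/-!
Adding a fixed vector `d` to the keys leaves the first shares of `B` unchanged and flips all
their second shares exactly when `d` vanishes on `B` and `(A d) i = 1` for every `i ∈ B`,
`A` being the adjacency matrix over `𝔽₂`. This is a linear system whose matrix is the block of
`A` between `B` and its complement. By the Fredholm alternative it is solvable unless some
`z` supported on `B`, with `z A` also supported on `B`, has odd weight; the support `D` of such
a `z` would be an odd subset of `B` with `Odd(D) ⊆ B`.
-/

open Matrix Finset

theorem Matrix.exists_mulVec_eq_of_forall_vecMul_eq_zero {K m n : Type*} [Field K] [Fintype m]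
    [DecidableEq m] [Fintype n] [DecidableEq n] (M : Matrix m n K) (y : m → K)
    (h : ∀ x, x ᵥ* M = 0 → x ⬝ᵥ y = 0) : ∃ d, M *ᵥ d = y := by
  suffices y ∈ LinearMap.range M.mulVecLin from this
  rw [← Subspace.forall_mem_dualAnnihilator_apply_eq_zero_iff]
  intro φ hφ
  obtain ⟨x, rfl⟩ := (dotProductEquiv K m).surjective φ
  have hxM : x ᵥ* M = 0 := by
    ext j
    have := (Submodule.mem_dualAnnihilator _).mp hφ _ ⟨Pi.single j 1, rfl⟩
    simp only [dotProductEquiv_apply_apply, mulVecLin_apply, dotProduct_mulVec,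
      dotProduct_single_one] at this
    exact this
  simpa using h x hxM

theorem ZMod.sum_two_eq_card_filter {ι : Type*} (S : Finset ι) (z : ι → ZMod 2) :
    ∑ i ∈ S, z i = #{i ∈ S | z i = 1} := by
  rw [natCast_card_filter]
  refine sum_congr rfl fun i _ => ?_
  generalize z i = a
  revert a
  decide

section

variable (G : SimpleGraph V) [DecidableRel G.Adj] {B : Finset V}

theorem sum_eq_zero_of_not_cAccessing (hB : ¬ cAccessing G B) (z : V → ZMod 2)
    (hz : ∀ v ∉ B, z v = 0) (hzA : ∀ v ∉ B, (z ᵥ* G.adjMatrix (ZMod 2)) v = 0) :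
    ∑ v, z v = 0 := by
  set D : Finset V := {v | z v = 1}
  have hDB : D ⊆ B := fun v hv => by
    by_contra hvB
    simp [D, hz v hvB] at hv
  have hDodd : oddNbhd G D ⊆ B := fun v hv => by
    by_contra hvB
    have hsum := hzA v hvB
    rw [SimpleGraph.adjMatrix_vecMul_apply, ZMod.sum_two_eq_card_filter,
      ZMod.natCast_eq_zero_iff_even, ← Nat.not_odd_iff_even] at hsum
    refine hsum ?_
    simpa [oddNbhd, D, inter_filter] using hv
  rw [ZMod.sum_two_eq_card_filter, ZMod.natCast_eq_zero_iff_even, ← Nat.not_odd_iff_even]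
  exact fun hDcard => hB ⟨D, hDB, hDcard, hDodd⟩

theorem exists_adjMatrix_mulVec_eq_one_of_not_cAccessing (hB : ¬ cAccessing G B) :
    ∃ d : V → ZMod 2, ∀ i ∈ B, d i = 0 ∧ (G.adjMatrix (ZMod 2) *ᵥ d) i = 1 := by
  let inB : V → ZMod 2 := fun v => if v ∈ B then 1 else 0
  let offB : V → ZMod 2 := fun v => if v ∈ B then 0 else 1
  have hsolvable : ∀ x, x ᵥ* (diagonal inB * G.adjMatrix (ZMod 2) * diagonal offB) = 0 →
      x ⬝ᵥ inB = 0 := by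
    intro x hx
    have hz : ∀ v ∉ B, (x ᵥ* diagonal inB) v = 0 := fun v hv => by
      simp [vecMul_diagonal, inB, hv]
    have hzA : ∀ v ∉ B, (x ᵥ* diagonal inB ᵥ* G.adjMatrix (ZMod 2)) v = 0 := fun v hv => by
      simpa [← vecMul_vecMul, vecMul_diagonal, offB, hv] using congrFun hx v
    simpa [dotProduct, vecMul_diagonal] using sum_eq_zero_of_not_cAccessing G hB _ hz hzA
  obtain ⟨d, hd⟩ := exists_mulVec_eq_of_forall_vecMul_eq_zero _ inB hsolvable
  refine ⟨diagonal offB *ᵥ d, fun i hi => ⟨by simp [offB, mulVec_diagonal, hi], ?_⟩⟩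
  have hdi := congrFun hd i
  have hinB : inB i = 1 := if_pos hi
  rwa [← mulVec_mulVec, ← mulVec_mulVec, mulVec_diagonal, hinB, one_mul] at hdi

end

theorem gss_privacy (G : SimpleGraph V) [DecidableRel G.Adj] (B : Finset V)
    (hB : ¬ cAccessing G B) (s : ZMod 2) :
    ∃ φ : (V → ZMod 2) ≃ (V → ZMod 2), ∀ k : V → ZMod 2, ∀ i ∈ B,
      (k i, s + ∑ j ∈ G.neighborFinset i, k j)
        = (φ k i, (s + 1) + ∑ j ∈ G.neighborFinset i, φ k j) := by
  obtain ⟨d, hd⟩ := exists_adjMatrix_mulVec_eq_one_of_not_cAccessing G hB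
  refine ⟨Equiv.addRight d, fun k i hi => ?_⟩
  obtain ⟨hdi, hAdi⟩ := hd i hi
  refine Prod.ext (by simp [hdi]) ?_
  simp only [Equiv.coe_addRight, Pi.add_apply, sum_add_distrib,
    ← SimpleGraph.adjMatrix_mulVec_apply, hAdi]
  grind
end

section
/- Perfectness of GSS: for every finite simple graph G and every set of players B, either B is authorised (can always recover the secret from its shares) or B is forbidden (the joint distribution of its shares under uniformly random keys is independent of the secret). -/
variable {V : Type*} [Fintype V] [DecidableEq V]

def forbidden (G : SimpleGraph V) [DecidableRel G.Adj] (B : Finset V) : Prop :=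
  ∀ (s s' : ZMod 2) (t : B → ZMod 2 × ZMod 2),
    (Finset.univ.filter fun k : V → ZMod 2 =>
        (fun i : B => (k i.1, s + ∑ j ∈ G.neighborFinset i.1, k j)) = t).card
      = (Finset.univ.filter fun k : V → ZMod 2 =>
        (fun i : B => (k i.1, s' + ∑ j ∈ G.neighborFinset i.1, k j)) = t).card

/-!
The shares of the players in `B` are `L k + s • e`, where `L` is the linear map sending the keys
`k` to `(k i, ∑ j ∈ N(i), k j)_{i ∈ B}` and `e = (0, 1)_{i ∈ B}`. If `e = L x`, translating the
keys by `x` turns the shares for secret `s` into those for `s + 1` and preserves the uniform key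
distribution, so `B` is forbidden. Otherwise some linear functional vanishes on the range of `L`
and takes the value `1` at `e`; it reads the secret off the shares, so `B` is authorised.
-/

open Finset

theorem card_filter_apply_add_eq_of_mem_range {F M N : Type*} [AddGroup M] [AddGroup N] [Fintype M]
    [DecidableEq N] [FunLike F M N] [AddMonoidHomClass F M N] (L : F) {e : N}
    (he : e ∈ Set.range L) (t : N) :
    #{k | L k + e = t} = #{k | L k = t} := by
  obtain ⟨x, rfl⟩ := he
  exact card_equiv (Equiv.addRight x) fun k => by simp

theorem exists_linearMap_decode_of_notMem_range {K M N : Type*} [Field K] [AddCommGroup M]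
    [Module K M] [AddCommGroup N] [Module K N] (L : M →ₗ[K] N) {e : N}
    (he : e ∉ LinearMap.range L) :
    ∃ f : N →ₗ[K] K, ∀ (s : K) (k : M), f (L k + s • e) = s := by
  obtain ⟨φ, hφe, hφL⟩ := Submodule.exists_dual_map_eq_bot_of_notMem he inferInstance
  rw [← LinearMap.le_ker_iff_map] at hφL
  refine ⟨(φ e)⁻¹ • φ, fun s k => ?_⟩
  have hφk : φ (L k) = 0 := hφL (LinearMap.mem_range_self L k)
  rw [LinearMap.smul_apply, map_add, map_smul, hφk, zero_add, smul_eq_mul, smul_eq_mul,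
    mul_left_comm, inv_mul_cancel₀ hφe, mul_one]

noncomputable def shareMap (G : SimpleGraph V) [DecidableRel G.Adj] (B : Finset V) :
    (V → ZMod 2) →ₗ[ZMod 2] (B → ZMod 2 × ZMod 2) where
  toFun k i := (k i.1, ∑ j ∈ G.neighborFinset i.1, k j)
  map_add' k l := by funext i; simp [sum_add_distrib]
  map_smul' c k := by funext i; simp [mul_sum]

theorem gss_perfect (G : SimpleGraph V) [DecidableRel G.Adj] (B : Finset V) :
    authorised G B ∨ forbidden G B := by
  set e : B → ZMod 2 × ZMod 2 := fun _ => (0, 1)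
  have hshares (s : ZMod 2) (k : V → ZMod 2) :
      (fun i : B => (k i.1, s + ∑ j ∈ G.neighborFinset i.1, k j)) = shareMap G B k + s • e := by
    funext i
    simp [shareMap, e, add_comm]
  by_cases he : e ∈ LinearMap.range (shareMap G B)
  · right
    intro s s' t
    have hse (c : ZMod 2) : c • e ∈ Set.range (shareMap G B) := Submodule.smul_mem _ c he
    simp only [hshares]
    rw [card_filter_apply_add_eq_of_mem_range _ (hse s), card_filter_apply_add_eq_of_mem_range _ (hse s')]
  · left
    obtain ⟨f, hf⟩ := exists_linearMap_decode_of_notMem_range (shareMap G B) he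
    exact ⟨f, fun s k => by rw [hshares]; exact hf s k⟩
end

section
/- GF(2) linear-algebra form of c-accessibility: let A be the adjacency matrix of a finite simple graph G over GF(2), and B ⊆ V. Then B is c-accessing iff there exists a vector x supported on B with Σ_v x(v) = 1 and (A x) supported on B. Dually, B is not c-accessing iff there exists y supported on V\B with (A y)(v) = 1 for all v ∈ B. Exactly one of these holds. -/
variable {V : Type*} [Fintype V] [DecidableEq V]

/-! Over GF(2) a vector is the characteristic vector of its support, `|D| mod 2` is the coordinate
sum of `1_D`, and `Odd(D)` is the support of `A 1_D`; this translates c-accessibility. The dual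
description is the Fredholm alternative: `B` is not c-accessing iff `x ↦ ∑ x` vanishes on
`W = {x | x and xA vanish off B}`, i.e. iff `1_B` lies in `W^⊥ = {z + A y | z, y vanish on B}`, the
column space of `[P | A P]` for the coordinate projection `P` killing `B`. -/

open Matrix Finset

namespace Matrix

variable {K m n : Type*} [Field K] [Fintype m] [Fintype n]

theorem exists_mulVec_eq_iff_forall_vecMul_eq_zero (M : Matrix m n K) (w : m → K) :
    (∃ u, M *ᵥ u = w) ↔ ∀ x, x ᵥ* M = 0 → x ⬝ᵥ w = 0 := by
  classical
  change w ∈ LinearMap.range M.mulVecLin ↔ _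
  rw [← Subspace.dualAnnihilator_dualCoannihilator_eq (W := LinearMap.range M.mulVecLin),
    Submodule.mem_dualCoannihilator]
  refine (dotProductEquiv K m).toEquiv.forall_congr_right.symm.trans (forall_congr' fun x => ?_)
  simp only [Submodule.mem_dualAnnihilator, LinearMap.mem_range, forall_exists_index,
    forall_apply_eq_imp_iff, mulVecLin_apply, LinearEquiv.coe_toEquiv,
    dotProductEquiv_apply_apply, dotProduct_mulVec, dotProduct_eq_zero_iff]

variable [DecidableEq n] (B : Finset n)

def projCompl (R : Type*) [Semiring R] : Matrix n n R :=
  diagonal fun v => if v ∈ B then 0 else 1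

section Semiring

variable {R : Type*} [Semiring R]

theorem projCompl_mulVec_apply_of_mem (u : n → R) {v : n} (hv : v ∈ B) :
    (projCompl B R *ᵥ u) v = 0 := by
  simp [projCompl, mulVec_diagonal, hv]

theorem projCompl_mulVec_of_forall_mem_eq_zero {y : n → R} (hy : ∀ v ∈ B, y v = 0) :
    projCompl B R *ᵥ y = y := by
  ext v
  by_cases hv : v ∈ B <;> simp [projCompl, mulVec_diagonal, hv, hy]

theorem vecMul_projCompl_eq_zero_iff (x : n → R) :
    x ᵥ* projCompl B R = 0 ↔ ∀ v ∉ B, x v = 0 := by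
  simp [projCompl, funext_iff, vecMul_diagonal]

theorem vecMul_fromCols_projCompl_eq_zero_iff (A : Matrix n n R) (x : n → R) :
    x ᵥ* fromCols (projCompl B R) (A * projCompl B R) = 0 ↔
      (∀ v ∉ B, x v = 0) ∧ ∀ v ∉ B, (x ᵥ* A) v = 0 := by
  rw [vecMul_fromCols, ← Sum.elim_zero_zero, Sum.elim_eq_iff, ← vecMul_vecMul,
    vecMul_projCompl_eq_zero_iff, vecMul_projCompl_eq_zero_iff]

end Semiring

theorem exists_fromCols_projCompl_mulVec_eq_indicator_iff {R : Type*} [Ring R]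
    (A : Matrix n n R) :
    (∃ u, fromCols (projCompl B R) (A * projCompl B R) *ᵥ u = (↑B : Set n).indicator 1) ↔
      ∃ y : n → R, (∀ v ∈ B, y v = 0) ∧ ∀ v ∈ B, (A *ᵥ y) v = 1 := by
  constructor
  · rintro ⟨u, hu⟩
    refine ⟨projCompl B R *ᵥ (u ∘ Sum.inr), fun v hv => projCompl_mulVec_apply_of_mem B _ hv,
      fun v hv => ?_⟩
    have huv := congrFun hu v
    rw [fromCols_mulVec, Pi.add_apply, projCompl_mulVec_apply_of_mem B _ hv, zero_add,
      ← mulVec_mulVec] at huv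
    simp [huv, hv]
  · rintro ⟨y, hy₀, hy₁⟩
    set w : n → R := (↑B : Set n).indicator 1
    have hz : ∀ v ∈ B, (w - A *ᵥ y) v = 0 := fun v hv => by simp [w, hv, hy₁ v hv]
    refine ⟨Sum.elim (w - A *ᵥ y) y, ?_⟩
    rw [fromCols_mulVec_sumElim, ← mulVec_mulVec, projCompl_mulVec_of_forall_mem_eq_zero B hz,
      projCompl_mulVec_of_forall_mem_eq_zero B hy₀, sub_add_cancel]

theorem forall_sum_eq_zero_iff_exists_mulVec_eq_one (A : Matrix n n K) :
    (∀ x : n → K, (∀ v ∉ B, x v = 0) → (∀ v ∉ B, (x ᵥ* A) v = 0) → ∑ v, x v = 0) ↔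
      ∃ y : n → K, (∀ v ∈ B, y v = 0) ∧ ∀ v ∈ B, (A *ᵥ y) v = 1 := by
  have hdot : ∀ x : n → K, (∀ v ∉ B, x v = 0) → x ⬝ᵥ (↑B : Set n).indicator 1 = ∑ v, x v := by
    intro x hx
    refine Finset.sum_congr rfl fun v _ => ?_
    by_cases hv : v ∈ B <;> simp [hv, hx]
  rw [← exists_fromCols_projCompl_mulVec_eq_indicator_iff,
    exists_mulVec_eq_iff_forall_vecMul_eq_zero]
  refine forall_congr' fun x => ?_
  rw [vecMul_fromCols_projCompl_eq_zero_iff, and_imp]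
  exact forall_congr' fun hx => by rw [hdot x hx]

end Matrix

theorem ZMod.ne_one_iff_eq_zero {a : ZMod 2} : a ≠ 1 ↔ a = 0 := by
  revert a
  decide

theorem Finset.indicator_one_surjective_zmod_two {α : Type*} [Fintype α] :
    Function.Surjective fun D : Finset α => (↑D : Set α).indicator (1 : α → ZMod 2) := by
  intro x
  refine ⟨univ.filter (x · = 1), funext fun v => ?_⟩
  by_cases hv : x v = 1
  · simp [hv]
  · simp [ZMod.ne_one_iff_eq_zero.mp hv]

theorem Finset.forall_notMem_indicator_one_eq_zero_iff {α R : Type*} [Zero R] [One R]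
    [NeZero (1 : R)] (D B : Finset α) :
    (∀ v ∉ B, (↑D : Set α).indicator (1 : α → R) v = 0) ↔ D ⊆ B := by
  refine ⟨fun h v hvD => ?_, fun h v hvB => ?_⟩
  · by_contra hvB
    simpa [hvD] using h v hvB
  · exact Set.indicator_of_notMem (fun hvD => hvB (h hvD)) _

theorem Finset.sum_indicator_one_zmod_two_eq_one_iff (D : Finset V) :
    ∑ v, (↑D : Set V).indicator (1 : V → ZMod 2) v = 1 ↔ Odd #D := by
  simp [Set.indicator_apply, ← ZMod.natCast_eq_one_iff_odd]

namespace SimpleGraph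

variable (G : SimpleGraph V) [DecidableRel G.Adj]

theorem adjMatrix_mulVec_indicator_one_apply {R : Type*} [NonAssocSemiring R] (D : Finset V)
    (v : V) : (G.adjMatrix R *ᵥ (↑D : Set V).indicator 1) v = #(G.neighborFinset v ∩ D) := by
  simp [Set.indicator_apply]

theorem indicator_one_oddNbhd (D : Finset V) :
    (↑(oddNbhd G D) : Set V).indicator 1 = G.adjMatrix (ZMod 2) *ᵥ (↑D : Set V).indicator 1 := by
  ext v
  rw [adjMatrix_mulVec_indicator_one_apply]
  by_cases hodd : Odd #(G.neighborFinset v ∩ D)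
  · simp [oddNbhd, hodd, ZMod.natCast_eq_one_iff_odd.mpr hodd]
  · simp [oddNbhd, hodd, ZMod.natCast_eq_zero_iff_even.mpr (Nat.not_odd_iff_even.mp hodd)]

end SimpleGraph

theorem cAccessing_iff_exists_zmod_two (G : SimpleGraph V) [DecidableRel G.Adj] (B : Finset V) :
    cAccessing G B ↔ ∃ x : V → ZMod 2, (∀ v ∉ B, x v = 0) ∧ ∑ v, x v = 1 ∧
      ∀ v ∉ B, (G.adjMatrix (ZMod 2) *ᵥ x) v = 0 := by
  rw [Finset.indicator_one_surjective_zmod_two.exists]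
  refine exists_congr fun D => ?_
  rw [← G.indicator_one_oddNbhd, Finset.forall_notMem_indicator_one_eq_zero_iff,
    Finset.forall_notMem_indicator_one_eq_zero_iff, Finset.sum_indicator_one_zmod_two_eq_one_iff]

theorem cAccessing_gf2 (G : SimpleGraph V) [DecidableRel G.Adj] (B : Finset V) :
    (cAccessing G B ↔ ∃ x : V → ZMod 2, (∀ v ∉ B, x v = 0) ∧ ∑ v, x v = 1 ∧
        ∀ v ∉ B, (G.adjMatrix (ZMod 2)).mulVec x v = 0) ∧
      (¬ cAccessing G B ↔ ∃ y : V → ZMod 2, (∀ v ∈ B, y v = 0) ∧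
        ∀ v ∈ B, (G.adjMatrix (ZMod 2)).mulVec y v = 1) := by
  have hsymm : ∀ x, x ᵥ* G.adjMatrix (ZMod 2) = G.adjMatrix (ZMod 2) *ᵥ x := fun x => by
    rw [← mulVec_transpose, SimpleGraph.transpose_adjMatrix]
  refine ⟨cAccessing_iff_exists_zmod_two G B, ?_⟩
  rw [cAccessing_iff_exists_zmod_two, ← forall_sum_eq_zero_iff_exists_mulVec_eq_one]
  simp only [not_exists, not_and, hsymm, ← ZMod.ne_one_iff_eq_zero, ne_eq]
  exact forall_congr' fun x => forall_congr' fun _ => imp_not_comm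
end

section
/- If B is authorised in the GSS scheme on G (i.e. some function of B's shares always recovers the secret), then B is c-accessing. Equivalently (contrapositive of combining Theorem 1 with perfectness): no set that fails to be c-accessing admits a recovery function. -/
variable {V : Type*} [Fintype V] [DecidableEq V]

/-!
Work over `ZMod 2` with the matrix `M` of edges from `B` to its complement (rows in `B`,
columns outside `B`). If `M d = 𝟙_B` is solvable, then the keys `d` outside `B` and `0` on `B`
give every player of `B` the same share for the secret `1` as the zero keys give for the
secret `0`, so `B` is not authorised. Otherwise the Fredholm alternative yields `y` with
`y M = 0` and `y ⬝ᵥ 𝟙_B = 1`; its support `D` in `B` then has odd size, and `y M = 0` says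
that every vertex outside `B` has an even number of neighbours in `D`.
-/

open Matrix Finset

theorem Matrix.exists_vecMul_eq_zero_dotProduct_ne_zero {K m n : Type*} [Field K] [Fintype m]
    [Fintype n] [DecidableEq m] (A : Matrix m n K) (b : m → K) (h : ∀ x, A *ᵥ x ≠ b) :
    ∃ y, y ᵥ* A = 0 ∧ y ⬝ᵥ b ≠ 0 := by
  have hb : b ∉ LinearMap.range A.mulVecLin := fun ⟨x, hx⟩ => h x hx
  obtain ⟨φ, hφb, hφA⟩ := Submodule.exists_dual_map_eq_bot_of_notMem hb inferInstance
  obtain ⟨y, rfl⟩ := (dotProductEquiv K m).surjective φ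
  refine ⟨y, ?_, hφb⟩
  classical
  ext j
  have hcol := Submodule.mem_map_of_mem (f := dotProductEquiv K m y)
    (LinearMap.mem_range_self A.mulVecLin (Pi.single j 1))
  rwa [hφA, Submodule.mem_bot, dotProductEquiv_apply_apply, mulVecLin_apply, dotProduct_mulVec,
    dotProduct_single, mul_one] at hcol

theorem ZMod.sum_eq_card_filter_eq_one {ι : Type*} (s : Finset ι) (y : ι → ZMod 2) :
    ∑ i ∈ s, y i = (#{i ∈ s | y i = 1} : ℕ) := by
  classical
  rw [natCast_card_filter]
  refine sum_congr rfl fun i _ => ?_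
  generalize y i = c
  revert c; decide

def cutMatrix (G : SimpleGraph V) [DecidableRel G.Adj] (B : Finset V) : Matrix V V (ZMod 2) :=
  Matrix.of fun i j => if i ∈ B ∧ j ∉ B ∧ G.Adj i j then 1 else 0

section cutMatrix

variable (G : SimpleGraph V) [DecidableRel G.Adj] {B : Finset V}

lemma mulVec_cutMatrix_apply {i : V} (hi : i ∈ B) (d : V → ZMod 2) :
    (cutMatrix G B *ᵥ d) i = ∑ j ∈ G.neighborFinset i, if j ∈ B then 0 else d j := by
  rw [SimpleGraph.neighborFinset_eq_filter, sum_filter]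
  refine sum_congr rfl fun j _ => ?_
  by_cases hj : j ∈ B <;> by_cases hij : G.Adj i j <;> simp [cutMatrix, hi, hj, hij]

lemma vecMul_cutMatrix_apply {v : V} (hv : v ∉ B) (y : V → ZMod 2) :
    (y ᵥ* cutMatrix G B) v = ∑ i ∈ G.neighborFinset v ∩ B, y i := by
  have hnbhd : G.neighborFinset v ∩ B = ({i | G.Adj i v ∧ i ∈ B} : Finset V) := by
    ext; simp [G.adj_comm]
  rw [hnbhd, sum_filter]
  refine sum_congr rfl fun i _ => ?_
  by_cases hi : i ∈ B <;> by_cases hiv : G.Adj i v <;> simp [cutMatrix, hv, hi, hiv]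

lemma not_authorised_of_mulVec_cutMatrix_eq {d : V → ZMod 2}
    (hd : cutMatrix G B *ᵥ d = fun i => if i ∈ B then 1 else 0) : ¬ authorised G B := by
  rintro ⟨f, hf⟩
  set k : V → ZMod 2 := fun j => if j ∈ B then 0 else d j
  have hshares : (fun i : B => (k i, 1 + ∑ j ∈ G.neighborFinset i, k j)) =
      fun i : B =>
        ((0 : V → ZMod 2) i, 0 + ∑ j ∈ G.neighborFinset i, (0 : V → ZMod 2) j) := by
    funext ⟨i, hi⟩
    have hsum : ∑ j ∈ G.neighborFinset i, k j = 1 := by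
      have hrow := congrFun hd i
      rw [mulVec_cutMatrix_apply G hi] at hrow
      simpa [hi] using hrow
    simp only [k, hi, if_true, hsum, Pi.zero_apply, sum_const_zero, add_zero, Prod.mk.injEq,
      true_and]
    decide
  have hsecret := hf 1 k
  rw [hshares, hf 0 0] at hsecret
  exact zero_ne_one hsecret

lemma cAccessing_of_vecMul_cutMatrix_eq_zero {y : V → ZMod 2} (hy : y ᵥ* cutMatrix G B = 0)
    (hyB : y ⬝ᵥ (fun i => if i ∈ B then 1 else 0) ≠ 0) : cAccessing G B := by
  refine ⟨{i ∈ B | y i = 1}, filter_subset _ _, ?_, fun v hv => ?_⟩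
  · rw [← Nat.not_even_iff_odd, ← ZMod.natCast_eq_zero_iff_even,
      ← ZMod.sum_eq_card_filter_eq_one]
    simpa [dotProduct] using hyB
  · by_contra hvB
    have hodd := (mem_filter.mp hv).2
    rw [← Nat.not_even_iff_odd, ← ZMod.natCast_eq_zero_iff_even, inter_filter,
      ← ZMod.sum_eq_card_filter_eq_one, ← vecMul_cutMatrix_apply G hvB, hy] at hodd
    exact hodd rfl

end cutMatrix

theorem authorised_cAccessing (G : SimpleGraph V) [DecidableRel G.Adj] (B : Finset V)
    (h : authorised G B) : cAccessing G B := by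
  by_cases hsolv : ∃ d, cutMatrix G B *ᵥ d = fun i => if i ∈ B then 1 else 0
  · obtain ⟨d, hd⟩ := hsolv
    exact absurd h (not_authorised_of_mulVec_cutMatrix_eq G hd)
  · push Not at hsolv
    obtain ⟨y, hy, hyB⟩ := (cutMatrix G B).exists_vecMul_eq_zero_dotProduct_ne_zero _ hsolv
    exact cAccessing_of_vecMul_cutMatrix_eq_zero G hy hyB
end
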